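/- arXiv:2101.00742 — 2 statements merged into one kernel-verified Lean document; each statement's English description precedes it below -/
import Mathlib

section
/- (Farkas' lemma) Let F be a real m×n matrix and b ∈ ℝ^m. Then exactly one of the following two statements is true: (1) there exists x ∈ ℝ^n with F x = b and x ≥ 0; (2) there exists y ∈ ℝ^m with Fᵀ y ≥ 0 and bᵀ y ≤ −1. -/
/-!
If `b` is not of the form `F x` with `x ≥ 0`, separate `b` from the cone `{F x | x ≥ 0}` by a
hyperplane through the origin; its normal `y` is the certificate. The separation theorem needs
the cone to be closed. By the conic Carathéodory theorem every point of the cone is a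
nonnegative combination of linearly independent columns of `F`, so the cone is a finite union of
injective linear images of closed orthants, each of which is closed.
-/

open Function Set Submodule Matrix

def Pi.supported {ι : Type*} (R : Type*) [Semiring R] (s : Set ι) : Submodule R (ι → R) :=
  Submodule.pi sᶜ fun _ ↦ ⊥

theorem Pi.mem_supported {ι R : Type*} [Semiring R] {s : Set ι} {g : ι → R} :
    g ∈ Pi.supported R s ↔ support g ⊆ s := by
  simp [Pi.supported, support_subset_iff, not_imp_comm]

section Caratheodory

variable {ι R M : Type*} [Fintype ι] [Field R] [LinearOrder R] [IsStrictOrderedRing R]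
  [AddCommGroup M] [Module R M]

theorem exists_nonneg_sub_smul_support_ssubset {c g : ι → R} (hc : 0 ≤ c)
    (hgc : support g ⊆ support c) {i₀ : ι} (hi₀ : 0 < g i₀) :
    ∃ t : R, 0 ≤ c - t • g ∧ support (c - t • g) ⊂ support c := by
  classical
  obtain ⟨j, hj, hjmin⟩ := (Finset.univ.filter (0 < g ·)).exists_min_image (fun i ↦ c i / g i)
    ⟨i₀, by simpa using hi₀⟩
  have hgj : 0 < g j := by simpa using hj
  have hcj : c j ≠ 0 := hgc hgj.ne'
  -- move from `c` along `-g` until the first coordinate of `c` hits zero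
  refine ⟨c j / g j, fun i ↦ ?_, ?_⟩
  · have ht : 0 ≤ c j / g j := div_nonneg (hc j) hgj.le
    simp only [Pi.zero_apply, Pi.sub_apply, Pi.smul_apply, smul_eq_mul, sub_nonneg]
    rcases le_or_gt (g i) 0 with hgi | hgi
    · have hci : 0 ≤ c i := hc i
      linarith [mul_nonpos_of_nonneg_of_nonpos ht hgi]
    · exact (le_div_iff₀ hgi).1 (hjmin i (by simpa using hgi))
  · refine (ssubset_iff_of_subset fun i hi ↦ ?_).2 ⟨j, hcj, ?_⟩
    · by_contra hci
      have hgi : g i = 0 := by_contra fun h ↦ hci (hgc h)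
      simp_all
    · simp [hgj.ne']

/-- Conic Carathéodory theorem. -/
theorem exists_nonneg_map_eq_disjoint_ker (f : (ι → R) →ₗ[R] M) {c : ι → R} (hc : 0 ≤ c) :
    ∃ d, 0 ≤ d ∧ f d = f c ∧ Disjoint (Pi.supported R (support d)) (LinearMap.ker f) := by
  induction h : (support c).ncard using Nat.strong_induction_on generalizing c with
  | _ k ih =>
    by_cases hdisj : Disjoint (Pi.supported R (support c)) (LinearMap.ker f)
    · exact ⟨c, hc, rfl, hdisj⟩
    obtain ⟨g, hgc, hgf, i₀, hi₀⟩ : ∃ g ∈ Pi.supported R (support c), f g = 0 ∧ ∃ i, 0 < g i := by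
      obtain ⟨g, hgc, hgf, hg⟩ := by simpa [disjoint_def] using hdisj
      obtain ⟨i, hi⟩ := Function.ne_iff.1 hg
      rcases (hi : g i ≠ 0).lt_or_gt with hneg | hpos
      · exact ⟨-g, neg_mem hgc, by simp [hgf], i, by simpa using hneg⟩
      · exact ⟨g, hgc, hgf, i, hpos⟩
    obtain ⟨t, hnonneg, hsupp⟩ :=
      exists_nonneg_sub_smul_support_ssubset hc (Pi.mem_supported.1 hgc) hi₀
    obtain ⟨d, hd, hfd, hdisj⟩ := ih _ (h ▸ ncard_lt_ncard hsupp) hnonneg rfl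
    exact ⟨d, hd, by simp [hfd, hgf], hdisj⟩

end Caratheodory

theorem PointedCone.isClosed_map_positive {ι E : Type*} [Fintype ι] [AddCommGroup E] [Module ℝ E]
    [TopologicalSpace E] [IsTopologicalAddGroup E] [ContinuousSMul ℝ E] [T2Space E]
    (f : (ι → ℝ) →ₗ[ℝ] E) :
    IsClosed ((PointedCone.positive ℝ (ι → ℝ)).map f : Set E) := by
  have hunion : ((PointedCone.positive ℝ (ι → ℝ)).map f : Set E) =
      ⋃ (s : Set ι) (_ : Disjoint (Pi.supported ℝ s) (LinearMap.ker f)),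
        f.domRestrict (Pi.supported ℝ s) '' (Subtype.val ⁻¹' Ici 0) := by
    ext b
    simp only [PointedCone.coe_map, mem_image, SetLike.mem_coe, PointedCone.mem_positive,
      mem_iUnion, mem_preimage, mem_Ici, Subtype.exists, LinearMap.domRestrict_apply, exists_prop]
    constructor
    · rintro ⟨c, hc, rfl⟩
      obtain ⟨d, hd, hfd, hdisj⟩ := exists_nonneg_map_eq_disjoint_ker f hc
      exact ⟨support d, hdisj, d, Pi.mem_supported.2 subset_rfl, hd, hfd⟩
    · rintro ⟨s, -, d, -, hd, rfl⟩
      exact ⟨d, hd, rfl⟩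
  rw [hunion]
  refine isClosed_iUnion_of_finite fun s ↦ isClosed_iUnion_of_finite fun hs ↦ ?_
  have hinj := LinearMap.injective_domRestrict_iff.2 hs
  exact (LinearMap.isClosedEmbedding_of_injective (LinearMap.ker_eq_bot.2 hinj)).isClosedMap _
    (isClosed_Ici.preimage continuous_subtype_val)

theorem Matrix.dotProduct_nonneg_of_mulVec_eq {m n R : Type*} [Fintype m] [Fintype n]
    [CommSemiring R] [PartialOrder R] [IsOrderedRing R]
    {F : Matrix m n R} {x : n → R} {y : m → R}
    (hx : 0 ≤ x) (hy : 0 ≤ Fᵀ *ᵥ y) : 0 ≤ (F *ᵥ x) ⬝ᵥ y := by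
  rw [← vecMul_transpose, ← dotProduct_mulVec]
  exact dotProduct_nonneg_of_nonneg hx hy

theorem Matrix.exists_transpose_mulVec_nonneg_dotProduct_neg {m n : Type*}
    [Fintype m] [Fintype n] {F : Matrix m n ℝ} {b : m → ℝ}
    (hb : ¬∃ x, F *ᵥ x = b ∧ 0 ≤ x) : ∃ y, 0 ≤ Fᵀ *ᵥ y ∧ b ⬝ᵥ y < 0 := by
  classical
  let C : ProperCone ℝ (m → ℝ) :=
    { toSubmodule := (PointedCone.positive ℝ (n → ℝ)).map F.mulVecLin
      isClosed' := PointedCone.isClosed_map_positive _ }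
  obtain ⟨φ, hφC, hφb⟩ :=
    C.hyperplane_separation_point (x₀ := b) fun ⟨x, hx, hFx⟩ ↦ hb ⟨x, hFx, hx⟩
  set y := (dotProductEquiv ℝ m).symm φ.toLinearMap
  have hy (z : m → ℝ) : y ⬝ᵥ z = φ z :=
    LinearMap.congr_fun ((dotProductEquiv ℝ m).apply_symm_apply φ.toLinearMap) z
  refine ⟨y, fun j ↦ ?_, by rwa [dotProduct_comm, hy]⟩
  have hcol : Fᵀ j ∈ C := ⟨Pi.single j 1, Pi.single_nonneg.2 zero_le_one, mulVec_single_one F j⟩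
  change 0 ≤ Fᵀ j ⬝ᵥ y
  rw [dotProduct_comm, hy]
  exact hφC _ hcol

/-- (Farkas' lemma) Let `F` be a real `m × n` matrix and `b ∈ ℝ^m`. Then exactly one of
the following is true: (1) there exists `x ∈ ℝ^n` with `F x = b` and `x ≥ 0`;
(2) there exists `y ∈ ℝ^m` with `Fᵀ y ≥ 0` and `bᵀ y ≤ -1`. -/
theorem farkas_lemma (m n : ℕ) (F : Matrix (Fin m) (Fin n) ℝ) (b : Fin m → ℝ) :
    Xor' (∃ x : Fin n → ℝ, F.mulVec x = b ∧ 0 ≤ x)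
      (∃ y : Fin m → ℝ, 0 ≤ Fᵀ.mulVec y ∧ b ⬝ᵥ y ≤ -1) := by
  by_cases hx : ∃ x : Fin n → ℝ, F.mulVec x = b ∧ 0 ≤ x
  · refine Or.inl ⟨hx, fun ⟨y, hy, hby⟩ ↦ ?_⟩
    obtain ⟨x, rfl, hx⟩ := hx
    linarith [dotProduct_nonneg_of_mulVec_eq hx hy]
  · obtain ⟨y, hy, hby⟩ := exists_transpose_mulVec_nonneg_dotProduct_neg hx
    refine Or.inr ⟨⟨(-(b ⬝ᵥ y))⁻¹ • y, ?_, ?_⟩, hx⟩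
    · rw [mulVec_smul]
      exact smul_nonneg (inv_nonneg.2 (neg_nonneg.2 hby.le)) hy
    · rw [dotProduct_smul, smul_eq_mul, inv_mul_eq_div, div_le_iff₀ (neg_pos.2 hby)]
      linarith
end

section
/- Let A be a real m×n matrix, b ∈ ℝ^m, c ∈ ℝ^n and M ∈ ℝ. The set {x ∈ ℝ^n : cᵀx ≥ M, A x ≤ b, x ≥ 0} is empty if and only if there exist y₁ ∈ ℝ and y₂ ∈ ℝ^m with y₁ ≥ 0, y₂ ≥ 0, −y₁·c + Aᵀy₂ ≥ 0 (componentwise), and −M·y₁ + bᵀy₂ ≤ −1. -/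
/-!
Farkas' lemma for a finite family `v` in a vector space over an ordered field, proved by induction
on the size of the family: if `d` is not a conic combination of `v₀, v₁, …`, the induction
hypothesis gives a functional `f ≥ 0` on `v₁, …` with `f d < 0`. If also `f v₀ < 0`, project
along `v₀` with `φ x = f x • v₀ - f v₀ • x`; then `φ d` is not a conic combination of the `φ vᵢ`,
and the functional `g ∘ φ` obtained from the induction hypothesis vanishes on `v₀`.

The infeasibility certificate is the inequality form of Farkas' lemma applied to the system
`(-c)ᵀ x ≤ -M`, `A x ≤ b`, `x ≥ 0`, after rescaling the certificate so that `-M y₁ + bᵀ y₂ ≤ -1`.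
-/

open Matrix

section Farkas

variable {𝕜 E F : Type*} [Field 𝕜] [LinearOrder 𝕜] [IsStrictOrderedRing 𝕜]
  [AddCommGroup E] [Module 𝕜 E] [AddCommGroup F] [Module 𝕜 F]

lemma exists_dual_apply_neg_of_ne_zero {d : E} (hd : d ≠ 0) :
    ∃ f : Module.Dual 𝕜 E, f d < 0 := by
  obtain ⟨f, hf⟩ : ∃ f : Module.Dual 𝕜 E, f d ≠ 0 := by
    by_contra! h
    exact hd ((Module.forall_dual_apply_eq_zero_iff 𝕜 d).mp h)
  exact ⟨-(f d)⁻¹ • f, by simp [hf]⟩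

namespace PointedCone

lemma dual_apply_nonneg_of_mem_hull {s : Set E} {f : Module.Dual 𝕜 E}
    (hf : ∀ x ∈ s, 0 ≤ f x) {x : E} (hx : x ∈ hull 𝕜 s) : 0 ≤ f x :=
  (Submodule.span_le.mpr hf : hull 𝕜 s ≤ (positive 𝕜 𝕜).comap f) hx

lemma hull_image_le_map (s : Set E) (φ : E →ₗ[𝕜] F) : hull 𝕜 (φ '' s) ≤ (hull 𝕜 s).map φ :=
  Submodule.span_le.mpr (Set.image_mono subset_hull)

theorem exists_dual_neg_of_notMem_hull_range_fin {k : ℕ} (v : Fin k → E) {d : E}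
    (hd : d ∉ hull 𝕜 (Set.range v)) :
    ∃ f : Module.Dual 𝕜 E, (∀ i, 0 ≤ f (v i)) ∧ f d < 0 := by
  induction k generalizing d with
  | zero =>
    obtain ⟨f, hf⟩ := exists_dual_apply_neg_of_ne_zero (𝕜 := 𝕜) (show d ≠ 0 by simpa using hd)
    exact ⟨f, finZeroElim, hf⟩
  | succ k ih =>
    rw [Fin.range_fin_succ] at hd
    set w := v 0
    obtain ⟨f, hf, hfd⟩ := ih (Fin.tail v) fun h ↦
      hd (Submodule.span_mono (Set.subset_insert _ _) h)
    by_cases hfw : 0 ≤ f w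
    · exact ⟨f, Fin.forall_fin_succ.mpr ⟨hfw, hf⟩, hfd⟩
    push Not at hfw
    let φ : E →ₗ[𝕜] E := f.smulRight w - f w • LinearMap.id
    have hφd : φ d ∉ hull 𝕜 (Set.range (φ ∘ Fin.tail v)) := by
      intro h
      rw [Set.range_comp] at h
      obtain ⟨z, hz, hφz⟩ := hull_image_le_map _ φ h
      have hfz := dual_apply_nonneg_of_mem_hull (Set.forall_mem_range.mpr hf) hz
      have hdz : d = z + ((f d - f z) / f w) • w := by
        have hφ : f z • w - f w • z = f d • w - f w • d := by simpa [φ] using hφz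
        apply smul_right_injective E hfw.ne
        simp only [smul_add, smul_smul, mul_div_cancel₀ _ hfw.ne]
        linear_combination (norm := module) hφ
      have hc : 0 ≤ (f d - f z) / f w := div_nonneg_of_nonpos (by linarith) hfw.le
      exact hd (hdz ▸ add_mem (Submodule.span_mono (Set.subset_insert _ _) hz)
        ((hull 𝕜 _).smul_mem hc (subset_hull (Set.mem_insert w _))))
    obtain ⟨g, hg, hgd⟩ := ih _ hφd
    have hφw : φ w = 0 := by simp [φ]
    exact ⟨g ∘ₗ φ, Fin.forall_fin_succ.mpr ⟨by simp [w, hφw], hg⟩, hgd⟩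

theorem exists_dual_neg_of_notMem_hull_range {ι : Type*} [Finite ι] (v : ι → E) {d : E}
    (hd : d ∉ hull 𝕜 (Set.range v)) :
    ∃ f : Module.Dual 𝕜 E, (∀ i, 0 ≤ f (v i)) ∧ f d < 0 := by
  obtain ⟨k, ⟨e⟩⟩ := Finite.exists_equiv_fin ι
  obtain ⟨f, hf, hfd⟩ := exists_dual_neg_of_notMem_hull_range_fin (v ∘ e.symm)
    (by rwa [e.symm.surjective.range_comp])
  exact ⟨f, fun i ↦ by simpa using hf (e i), hfd⟩

end PointedCone

end Farkas

namespace Matrix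

variable {𝕜 ι κ : Type*} [Field 𝕜] [LinearOrder 𝕜] [IsStrictOrderedRing 𝕜]
  [Fintype ι] [Fintype κ]

theorem not_exists_nonneg_mulVec_le_iff (B : Matrix κ ι 𝕜) (d : κ → 𝕜) :
    (¬∃ x, 0 ≤ x ∧ B *ᵥ x ≤ d) ↔ ∃ y, 0 ≤ y ∧ 0 ≤ Bᵀ *ᵥ y ∧ d ⬝ᵥ y < 0 := by
  classical
  constructor
  · intro h
    -- a conic combination of the columns of `B` and the `eᵢ` equal to `d` solves `B x ≤ d`, `x ≥ 0`
    let v : ι ⊕ κ → κ → 𝕜 := Sum.elim (fun j ↦ Bᵀ j) (fun i ↦ Pi.single i 1)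
    have hd : d ∉ PointedCone.hull 𝕜 (Set.range v) := by
      let C : PointedCone 𝕜 (κ → 𝕜) :=
        (PointedCone.positive 𝕜 ((ι → 𝕜) × (κ → 𝕜))).map (B.mulVecLin.coprod LinearMap.id)
      have hC : PointedCone.hull 𝕜 (Set.range v) ≤ C := by
        refine Submodule.span_le.mpr (Set.range_subset_iff.mpr ?_)
        rintro (j | i)
        · exact ⟨(Pi.single j 1, 0), by simp [Prod.le_def], by ext; simp [v]⟩
        · exact ⟨(0, Pi.single i 1), by simp [Prod.le_def], by simp [v]⟩
      rintro hd
      obtain ⟨⟨x, s⟩, ⟨hx, hs⟩, hxs⟩ := hC hd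
      exact h ⟨x, hx, hxs ▸ by simpa using hs⟩
    obtain ⟨f, hf, hfd⟩ := PointedCone.exists_dual_neg_of_notMem_hull_range v hd
    obtain ⟨y, rfl⟩ := (dotProductEquiv 𝕜 κ).surjective f
    refine ⟨y, fun i ↦ ?_, fun j ↦ ?_, ?_⟩
    · simpa [v] using hf (.inr i)
    · change 0 ≤ Bᵀ j ⬝ᵥ y
      simpa [v, dotProduct_comm] using hf (.inl j)
    · simpa [dotProduct_comm] using hfd
  · rintro ⟨y, hy, hBy, hdy⟩ ⟨x, hx, hBx⟩
    refine lt_irrefl (0 : 𝕜) ?_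
    calc 0 ≤ y ⬝ᵥ (B *ᵥ x) := by
          rw [dotProduct_mulVec, ← mulVec_transpose]
          exact dotProduct_nonneg_of_nonneg hBy hx
      _ ≤ y ⬝ᵥ d := dotProduct_le_dotProduct_of_nonneg_left hBx hy
      _ = d ⬝ᵥ y := dotProduct_comm _ _
      _ < 0 := hdy

theorem not_exists_nonneg_mulVec_le_iff_le_neg_one (B : Matrix κ ι 𝕜) (d : κ → 𝕜) :
    (¬∃ x, 0 ≤ x ∧ B *ᵥ x ≤ d) ↔ ∃ y, 0 ≤ y ∧ 0 ≤ Bᵀ *ᵥ y ∧ d ⬝ᵥ y ≤ -1 := by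
  rw [not_exists_nonneg_mulVec_le_iff]
  constructor
  · rintro ⟨y, hy, hBy, hdy⟩
    have hδ : 0 < (-(d ⬝ᵥ y))⁻¹ := by simpa using hdy
    refine ⟨(-(d ⬝ᵥ y))⁻¹ • y, smul_nonneg hδ.le hy, ?_, ?_⟩
    · rw [mulVec_smul]
      exact smul_nonneg hδ.le hBy
    · rw [dotProduct_smul, smul_eq_mul, inv_mul_eq_div, div_neg, div_self hdy.ne]
  · rintro ⟨y, hy, hBy, hdy⟩
    exact ⟨y, hy, hBy, hdy.trans_lt neg_one_lt_zero⟩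

end Matrix

/-- The set `{x : cᵀx ≥ M, A x ≤ b, x ≥ 0}` is empty iff there exist `y₁ ∈ ℝ`, `y₂ ∈ ℝ^m`
with `y₁ ≥ 0`, `y₂ ≥ 0`, `-y₁ c + Aᵀ y₂ ≥ 0` and `-M y₁ + bᵀ y₂ ≤ -1`. -/
theorem infeasibility_certificate (m n : ℕ) (A : Matrix (Fin m) (Fin n) ℝ)
    (b : Fin m → ℝ) (c : Fin n → ℝ) (M : ℝ) :
    {x : Fin n → ℝ | c ⬝ᵥ x ≥ M ∧ A.mulVec x ≤ b ∧ 0 ≤ x} = ∅ ↔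
      (∃ (y₁ : ℝ) (y₂ : Fin m → ℝ),
        0 ≤ y₁ ∧ 0 ≤ y₂ ∧ 0 ≤ -y₁ • c + Aᵀ.mulVec y₂ ∧ -M * y₁ + b ⬝ᵥ y₂ ≤ -1) := by
  set B : Matrix (Fin (m + 1)) (Fin n) ℝ := of (vecCons (-c) fun i ↦ A i)
  set d : Fin (m + 1) → ℝ := vecCons (-M) b
  have hBx (x : Fin n → ℝ) : B *ᵥ x = vecCons (-c ⬝ᵥ x) (A *ᵥ x) := cons_mulVec _ _ _
  have hBy (y : Fin (m + 1) → ℝ) : Bᵀ *ᵥ y = -y 0 • c + Aᵀ *ᵥ Fin.tail y := by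
    rw [mulVec_transpose, mulVec_transpose, vecMul_cons, smul_neg, neg_smul]
    rfl
  have hdy (y : Fin (m + 1) → ℝ) : d ⬝ᵥ y = -M * y 0 + b ⬝ᵥ Fin.tail y := cons_dotProduct _ _ _
  have hy (y : Fin (m + 1) → ℝ) : 0 ≤ y ↔ 0 ≤ y 0 ∧ 0 ≤ Fin.tail y := by
    rw [← cons_zero_zero]
    exact Fin.cons_le
  have hfeas : {x : Fin n → ℝ | c ⬝ᵥ x ≥ M ∧ A.mulVec x ≤ b ∧ 0 ≤ x} = ∅ ↔
      ¬∃ x, 0 ≤ x ∧ B *ᵥ x ≤ d := by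
    simp only [Set.eq_empty_iff_forall_notMem, Set.mem_ofPred_eq, not_exists, hBx, d, vecCons,
      Fin.cons_le_cons, neg_dotProduct, neg_le_neg_iff]
    exact forall_congr' fun x ↦ by tauto
  rw [hfeas, not_exists_nonneg_mulVec_le_iff_le_neg_one B d, Fin.exists_fin_succ_pi]
  simp only [hy, hBy, hdy, Fin.cons_zero, Fin.tail_cons, and_assoc]
end
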